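/- arXiv:1208.6533 — 2 statements merged into one kernel-verified Lean document; each statement's English description precedes it below -/
import Mathlib

section
/- Let λ₁, …, λ_N be integers, let q be a positive integer, and let I ⊆ [0,1] be a closed interval with |I| ≥ N²/q. Then the number of integers a with a/q ∈ I and |Σ_{n=1}^N e(λ_n a/q)| ≥ (|I|/100)^N is at least q|I|/(100N)². -/
open scoped Real Topology BigOperators Classical
open MeasureTheory Asymptotics Filter

noncomputable def e2pi (t : ℝ) : ℂ := Complex.exp (2 * Real.pi * Complex.I * t)

/-- `F(x) = ∑_{n≥1} e(P(n)x)/n^α`. -/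
noncomputable def Ffun (P : Polynomial ℤ) (α : ℝ) (x : ℝ) : ℂ :=
  ∑' n : ℕ+, e2pi (((P.eval (n : ℤ) : ℤ) : ℝ) * x) / (((n : ℝ) ^ α : ℝ) : ℂ)

/-- The Hölder exponent of `f` at `x`. -/
noncomputable def holderExponent (f : ℝ → ℂ) (x : ℝ) : ℝ :=
  sSup {γ : ℝ | ∃ Q : Polynomial ℂ, (Q.natDegree : ℝ) ≤ γ ∧
    (fun h : ℝ => f (x + h) - Q.eval (h : ℂ)) =O[𝓝[≠] (0 : ℝ)] fun h : ℝ => |h| ^ γ}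

/-- Maximal multiplicity of a complex zero of `P'`. -/
noncomputable def nuF (P : Polynomial ℤ) : ℕ :=
  ⨆ z : ℂ, Polynomial.rootMultiplicity z (P.derivative.map (Int.castRingHom ℂ))

noncomputable def nu0 (P : Polynomial ℤ) : ℕ := max (nuF P) 2

/-- `sup_{H ≤ |h| < 2H} ‖f(x+h) - f(x)‖²`. -/
noncomputable def supOsc (f : ℝ → ℂ) (x H : ℝ) : ℝ :=
  sSup {y : ℝ | ∃ h : ℝ, H ≤ |h| ∧ |h| < 2 * H ∧ y = ‖f (x + h) - f x‖ ^ 2}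

/-!
Write `f a = ∑ₙ e(λₙ a / q)`; the integers `a` with `a / q ∈ I` form a window `[A, B]` with
`B - A ≥ q |I| - 2`. A product of `m` difference operators `g ↦ g (· + k) - ω g` with `|ω| = 1`
acts diagonally on the terms of `f`, and its value at `x` is at most `2 ^ m` times the maximum of
`|f|` on the points it samples.

Anchor (Turán): reduce the frequencies modulo `q` relative to `λ₁`. For each of the `R < N`
other residues `w` pick a step `k_w ≤ (B - A) / R` with
`|1 - e(w k_w / q)| ≥ min 1 (|I| dist(w, qℤ) / R)` and take `ω = e(w k_w / q)`. These operators
kill every residue class but that of `λ₁` and leave `∏_w (1 - e(w k_w / q))`, of size at least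
`(|I| / 2e) ^ R` because `dist(w, qℤ)` takes each value at most twice. Hence
`|f| ≥ (|I| / 4e) ^ R ≥ (|I| / 50) ^ N` somewhere in the window.

Spreading: with `ω_m = e(λₘ t / q)`, `m ≤ N`, the operators annihilate `f`, so `|f b| ≥ 2 ^ N δ`
forces `|f (b + j t)| ≥ δ` for some `1 ≤ j ≤ N`. From the anchor, the steps
`t = 1, …, (B - A) / (2N)` towards the farther end of the window give at least
`(B - A) / (2N²)` distinct points where `|f| ≥ (|I| / 100) ^ N`.
-/

open Finset Real

lemma e2pi_add (x y : ℝ) : e2pi (x + y) = e2pi x * e2pi y := by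
  rw [e2pi, e2pi, e2pi, ← Complex.exp_add]
  push_cast
  ring_nf

lemma norm_e2pi (x : ℝ) : ‖e2pi x‖ = 1 := by
  rw [e2pi, mul_comm, ← mul_assoc, ← Complex.ofReal_ofNat, ← Complex.ofReal_mul,
    ← Complex.ofReal_mul]
  exact Complex.norm_exp_ofReal_mul_I _

lemma e2pi_add_intCast (x : ℝ) (n : ℤ) : e2pi (x + n) = e2pi x := by
  have : e2pi n = 1 := by
    rw [e2pi, mul_comm, Complex.ofReal_intCast, Complex.exp_int_mul_two_pi_mul_I]
  rw [e2pi_add, this, mul_one]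

lemma norm_one_sub_e2pi (x : ℝ) : ‖1 - e2pi x‖ = 2 * |sin (π * x)| := by
  rw [norm_sub_rev, e2pi, show 2 * (π : ℂ) * Complex.I * x = Complex.I * ↑(2 * π * x) by
    push_cast; ring, Complex.norm_exp_I_mul_ofReal_sub_one, norm_mul, Real.norm_eq_abs,
    Real.norm_eq_abs, abs_two]
  ring_nf

lemma norm_one_sub_e2pi_neg (x : ℝ) : ‖1 - e2pi (-x)‖ = ‖1 - e2pi x‖ := by
  rw [norm_one_sub_e2pi, norm_one_sub_e2pi, mul_neg, sin_neg, abs_neg]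

lemma four_mul_min_le_norm_one_sub_e2pi {x : ℝ} (h0 : 0 ≤ x) (h1 : x ≤ 1) :
    4 * min x (1 - x) ≤ ‖1 - e2pi x‖ := by
  have hsin : sin (π * x) = sin (π * min x (1 - x)) := by
    rcases min_cases x (1 - x) with ⟨h, -⟩ | ⟨h, -⟩
    · rw [h]
    · rw [h, mul_sub, mul_one, sin_pi_sub]
  have hjordan : 2 / π * (π * min x (1 - x)) ≤ sin (π * min x (1 - x)) :=
    mul_le_sin (by positivity)
      (by nlinarith [min_le_left x (1 - x), min_le_right x (1 - x), pi_pos])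
  have hmin : 0 ≤ 2 / π * (π * min x (1 - x)) := by positivity
  rw [norm_one_sub_e2pi, hsin, abs_of_nonneg (hmin.trans hjordan)]
  field_simp at hjordan
  linarith

lemma exists_mem_Icc_min_le_norm_one_sub_e2pi {δ : ℝ} (hδ0 : 0 ≤ δ) (hδ : δ ≤ 1 / 2) {K : ℕ}
    (hK : 1 ≤ K) : ∃ k ∈ Icc 1 K, min 1 (4 * K * δ) ≤ ‖1 - e2pi (k * δ)‖ := by
  by_cases hsmall : 4 * K * δ ≤ 1
  · refine ⟨K, mem_Icc.2 ⟨hK, le_rfl⟩, ?_⟩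
    have h := four_mul_min_le_norm_one_sub_e2pi (x := K * δ) (by positivity) (by linarith)
    rw [min_eq_left (by linarith)] at h
    linarith [min_le_right 1 (4 * K * δ)]
  · -- the first multiple of `δ` beyond `1/4` still lies in `[1/4, 3/4]`
    have hδpos : 0 < δ := by by_contra! h; nlinarith
    have hfloor := Nat.lt_floor_add_one (1 / (4 * δ))
    have hfloor' := Nat.floor_le (a := 1 / (4 * δ)) (by positivity)
    refine ⟨⌊1 / (4 * δ)⌋₊ + 1, mem_Icc.2 ⟨le_add_self, ?_⟩, ?_⟩
    · have : ⌊1 / (4 * δ)⌋₊ < K := by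
        rw [Nat.floor_lt (by positivity), div_lt_iff₀ (by positivity)]
        linarith
      omega
    · set k : ℕ := ⌊1 / (4 * δ)⌋₊ + 1
      have hk : (k : ℝ) = ⌊1 / (4 * δ)⌋₊ + 1 := by push_cast [k]; rfl
      have hlow : 1 / 4 ≤ k * δ := by
        rw [hk]; rw [div_lt_iff₀ (by positivity)] at hfloor; nlinarith
      have hup : k * δ ≤ 3 / 4 := by
        rw [hk]; rw [le_div_iff₀ (by positivity)] at hfloor'; nlinarith
      have h := four_mul_min_le_norm_one_sub_e2pi (x := k * δ) (by linarith) (by linarith)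
      linarith [min_le_left 1 (4 * K * δ), le_min hlow (by linarith : 1 / 4 ≤ 1 - k * δ)]

noncomputable def fracChar (q : ℕ) (m : ℤ) : AddChar ℤ ℂ where
  toFun a := e2pi (m * a / q)
  map_zero_eq_one' := by simp [e2pi]
  map_add_eq_mul' a b := by rw [← e2pi_add]; push_cast; ring_nf

section fracChar

variable (q : ℕ)

@[simp]
lemma fracChar_apply (m a : ℤ) : fracChar q m a = e2pi (m * a / q) := rfl

lemma norm_fracChar (m a : ℤ) : ‖fracChar q m a‖ = 1 := norm_e2pi _

lemma fracChar_comm (m a : ℤ) : fracChar q m a = fracChar q a m := by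
  rw [fracChar_apply, fracChar_apply, mul_comm]

lemma fracChar_zero (a : ℤ) : fracChar q 0 a = 1 := by simp [e2pi]

lemma fracChar_add_mul (m d a : ℤ) (hq : q ≠ 0) :
    fracChar q (m + q * d) a = fracChar q m a := by
  rw [fracChar_apply, fracChar_apply, ← e2pi_add_intCast (m * a / q) (d * a)]
  congr 1
  push_cast
  field_simp

lemma fracChar_add (m m' a : ℤ) : fracChar q (m + m') a = fracChar q m a * fracChar q m' a := by
  rw [fracChar_comm, AddChar.map_add_eq_mul, fracChar_comm, fracChar_comm q a]

lemma norm_sum_fracChar_eq_norm_sum_emod {ι : Type*} (s : Finset ι) (lam : ι → ℤ) (c a : ℤ)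
    (hq : q ≠ 0) :
    ‖∑ n ∈ s, fracChar q (lam n) a‖ = ‖∑ n ∈ s, fracChar q ((lam n - c) % q) a‖ := by
  have h : ∀ n, fracChar q (lam n) a = fracChar q c a * fracChar q ((lam n - c) % q) a := by
    intro n
    have hdiv : lam n = c + (lam n - c) % q + q * ((lam n - c) / q) := by
      rw [add_assoc, Int.emod_add_mul_ediv, add_sub_cancel]
    conv_lhs => rw [hdiv, fracChar_add_mul q _ _ _ hq, fracChar_add]
  simp_rw [h, ← mul_sum, norm_mul, norm_fracChar, one_mul]

end fracChar

lemma exists_mem_Icc_min_le_norm_one_sub_fracChar {q w : ℕ} (hwq : w < q) {K : ℕ} (hK : 1 ≤ K) :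
    ∃ k ∈ Icc 1 K, min (1 : ℝ) (4 * K * (min w (q - w) : ℕ) / q) ≤ ‖1 - fracChar q w k‖ := by
  have hq : (0 : ℝ) < q := by exact_mod_cast (w.zero_le.trans_lt hwq)
  have hdist : (min w (q - w) : ℕ) / (q : ℝ) ≤ 1 / 2 := by
    rw [div_le_iff₀ hq]
    have h2 : ((2 * min w (q - w) : ℕ) : ℝ) ≤ q := by
      exact_mod_cast (by omega : 2 * min w (q - w) ≤ q)
    rw [Nat.cast_mul, Nat.cast_two] at h2
    linarith
  obtain ⟨k, hk, hnorm⟩ := exists_mem_Icc_min_le_norm_one_sub_e2pi (by positivity) hdist hK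
  refine ⟨k, hk, ?_⟩
  have hsym : ‖1 - fracChar q w k‖ = ‖1 - e2pi (k * ((min w (q - w) : ℕ) / q))‖ := by
    rw [fracChar_apply]
    rcases min_cases w (q - w) with ⟨h, -⟩ | ⟨h, -⟩
    · rw [h]; push_cast; ring_nf
    · -- `e(w k / q) = e(k - (q - w) k / q)`
      rw [h, ← norm_one_sub_e2pi_neg, ← e2pi_add_intCast _ k]
      push_cast [hwq.le]
      field_simp
      ring_nf
  rw [hsym, mul_div_assoc]
  exact hnorm

section DifferenceOperator

variable {ι κ G R : Type*} [AddCommMonoid G] [CommRing R] (s : Finset ι)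

lemma AddChar.map_sum_eq_prod {M : Type*} [CommMonoid M] (ψ : AddChar G M) (T : Finset κ)
    (k : κ → G) :
    ψ (∑ j ∈ T, k j) = ∏ j ∈ T, ψ (k j) := by
  induction T using Finset.induction_on with
  | empty => simp
  | insert j T hj ih => rw [sum_insert hj, prod_insert hj, AddChar.map_add_eq_mul, ih]

/-- The left side is `(∏ j ∈ S, Δ j) f x` for `f = ∑ i ∈ s, ψ i` and the difference operators
`Δ j g = g (· + k j) - ω j • g`; the right side is its expansion. -/
lemma sum_mul_prod_sub_eq_sum_powerset (ψ : ι → AddChar G R) (S : Finset κ) (k : κ → G)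
    (ω : κ → R) (x : G) :
    ∑ i ∈ s, ψ i x * ∏ j ∈ S, (ψ i (k j) - ω j) =
      ∑ T ∈ S.powerset, (∏ j ∈ S \ T, -ω j) * ∑ i ∈ s, ψ i (x + ∑ j ∈ T, k j) := by
  simp_rw [sub_eq_add_neg, prod_add, mul_sum, AddChar.map_add_eq_mul, AddChar.map_sum_eq_prod]
  rw [sum_comm]
  refine sum_congr rfl fun T _ => sum_congr rfl fun i _ => ?_
  ring

lemma norm_sum_mul_prod_sub_le (ψ : ι → AddChar G ℂ) (S : Finset κ) (k : κ → G) {ω : κ → ℂ}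
    (hω : ∀ j ∈ S, ‖ω j‖ ≤ 1) (x : G) :
    ‖∑ i ∈ s, ψ i x * ∏ j ∈ S, (ψ i (k j) - ω j)‖ ≤
      ∑ T ∈ S.powerset, ‖∑ i ∈ s, ψ i (x + ∑ j ∈ T, k j)‖ := by
  rw [sum_mul_prod_sub_eq_sum_powerset]
  refine (norm_sum_le _ _).trans (sum_le_sum fun T hT => ?_)
  rw [norm_mul, norm_prod]
  refine mul_le_of_le_one_left (norm_nonneg _) (prod_le_one (fun _ _ => norm_nonneg _) ?_)
  intro j hj
  rw [norm_neg]
  exact hω j (sdiff_subset hj)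

lemma sum_mul_prod_sub_eq_card_smul [DecidableEq κ] (ψ : κ → AddChar G R) (μ : ι → κ)
    (W : Finset κ) (k : κ → G) {z : κ} (hμ : ∀ n ∈ s, μ n = z ∨ μ n ∈ W) (x : G) :
    ∑ n ∈ s, ψ (μ n) x * ∏ w ∈ W, (ψ (μ n) (k w) - ψ w (k w)) =
      #{n ∈ s | μ n = z} • (ψ z x * ∏ w ∈ W, (ψ z (k w) - ψ w (k w))) := by
  have hvanish : ∀ n ∈ s.filter (¬ μ · = z),
      ψ (μ n) x * ∏ w ∈ W, (ψ (μ n) (k w) - ψ w (k w)) = 0 := fun n hn => by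
      obtain ⟨hn, hnz⟩ := mem_filter.1 hn
      rw [prod_eq_zero ((hμ n hn).resolve_left hnz) (sub_self _), mul_zero]
  rw [← sum_filter_add_sum_filter_not s (μ · = z), sum_eq_zero hvanish, add_zero, ← sum_const]
  exact sum_congr rfl fun n hn => by rw [(mem_filter.1 hn).2]

lemma exists_le_norm_sum_add_nsmul (hs : s.Nonempty) (ψ : ι → AddChar G ℂ)
    (hψ : ∀ i x, ‖ψ i x‖ = 1) (b t : G) {δ : ℝ} (h : 2 ^ #s * δ ≤ ‖∑ i ∈ s, ψ i b‖) :
    ∃ j ∈ Icc 1 #s, δ ≤ ‖∑ i ∈ s, ψ i (b + j • t)‖ := by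
  by_contra! hlt
  -- `∏ m ∈ s, (X - ψ m t)` vanishes at every `X = ψ i t`
  have hzero := sum_mul_prod_sub_eq_sum_powerset s ψ s (fun _ => t) (fun m => ψ m t) b
  rw [sum_eq_zero fun i hi => by rw [prod_eq_zero hi (sub_self _), mul_zero],
    ← add_sum_erase _ _ (empty_mem_powerset s)] at hzero
  simp only [sdiff_empty, sum_const, card_empty, zero_smul, add_zero] at hzero
  have hcard : ∀ T ∈ s.powerset.erase ∅, #T ∈ Icc 1 #s := fun T hT => by
    obtain ⟨hne, hsub⟩ := mem_erase.1 hT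
    exact mem_Icc.2 ⟨card_pos.2 (nonempty_iff_ne_empty.2 hne), card_le_card (mem_powerset.1 hsub)⟩
  have hδ : 0 < δ := (norm_nonneg _).trans_lt (hlt 1 (mem_Icc.2 ⟨le_rfl, hs.card_pos⟩))
  have hlead : ‖∑ i ∈ s, ψ i b‖ < (2 ^ #s - 1) * δ := calc
    ‖∑ i ∈ s, ψ i b‖ = ‖(∏ m ∈ s, -ψ m t) * ∑ i ∈ s, ψ i b‖ := by simp [norm_prod, hψ]
    _ = ‖∑ T ∈ s.powerset.erase ∅, (∏ m ∈ s \ T, -ψ m t) * ∑ i ∈ s, ψ i (b + #T • t)‖ := by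
      rw [eq_neg_of_add_eq_zero_left hzero.symm, norm_neg]
    _ ≤ ∑ T ∈ s.powerset.erase ∅, ‖∑ i ∈ s, ψ i (b + #T • t)‖ := by
      refine (norm_sum_le _ _).trans (sum_le_sum fun T _ => ?_)
      simp [norm_prod, hψ]
    _ < ∑ T ∈ s.powerset.erase ∅, δ :=
      sum_lt_sum_of_nonempty ⟨s, mem_erase.2 ⟨hs.ne_empty, mem_powerset_self s⟩⟩
        fun T hT => hlt _ (hcard T hT)
    _ = (2 ^ #s - 1) * δ := by
      rw [sum_const, card_erase_of_mem (empty_mem_powerset s), card_powerset, nsmul_eq_mul,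
        Nat.cast_sub Nat.one_le_two_pow]
      push_cast
      ring
  linarith

lemma norm_sum_mul_prod_sub_le_two_pow_mul (ψ : ι → AddChar ℤ ℂ) (S : Finset κ)
    (k : κ → ℕ) {ω : κ → ℂ} (hω : ∀ j ∈ S, ‖ω j‖ ≤ 1) (x : ℤ) {M : ℝ}
    (hM : ∀ y ∈ Icc x (x + ∑ j ∈ S, (k j : ℤ)), ‖∑ i ∈ s, ψ i y‖ ≤ M) :
    ‖∑ i ∈ s, ψ i x * ∏ j ∈ S, (ψ i (k j) - ω j)‖ ≤ 2 ^ #S * M := by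
  refine (norm_sum_mul_prod_sub_le s ψ S (fun j => (k j : ℤ)) hω x).trans ?_
  calc ∑ T ∈ S.powerset, ‖∑ i ∈ s, ψ i (x + ∑ j ∈ T, (k j : ℤ))‖ ≤ ∑ T ∈ S.powerset, M := by
        refine sum_le_sum fun T hT => hM _ (mem_Icc.2 ⟨?_, ?_⟩)
        · exact le_add_of_nonneg_right (sum_nonneg fun j _ => by positivity)
        · exact add_le_add_right (sum_le_sum_of_subset_of_nonneg (mem_powerset.1 hT)
            fun j _ _ => by positivity) x
    _ = 2 ^ #S * M := by rw [sum_const, card_powerset, nsmul_eq_mul]; push_cast; rfl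

end DifferenceOperator

lemma prod_range_le_prod_of_injOn {α : Type*} {S : Finset α} {h : α → ℕ} (hinj : Set.InjOn h S)
    (hpos : ∀ x ∈ S, 0 < h x) {g : ℕ → ℝ} (hg : Monotone g) (hg0 : ∀ i, 0 ≤ g i) :
    ∏ i ∈ range #S, g (i + 1) ≤ ∏ x ∈ S, g (h x) := by
  rw [← prod_image hinj, ← card_image_of_injOn hinj]
  have hpos' : ∀ y ∈ S.image h, 0 < y := by
    simpa only [mem_image, forall_exists_index, and_imp, forall_apply_eq_imp_iff₂] using hpos
  generalize S.image h = T at hpos' ⊢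
  induction T using Finset.induction_on_max with
  | empty => simp
  | insert a T hlt ih =>
    have ha : a ∉ T := fun ha => lt_irrefl a (hlt a ha)
    have hTa : #T + 1 ≤ a := by
      have : T ⊆ Ico 1 a := fun y hy =>
        mem_Ico.2 ⟨hpos' y (mem_insert_of_mem hy), hlt y hy⟩
      have := card_le_card this
      rw [Nat.card_Ico] at this
      have := hpos' a (mem_insert_self a T)
      omega
    rw [card_insert_of_notMem ha, prod_range_succ, prod_insert ha, mul_comm]
    exact mul_le_mul (hg hTa) (ih fun y hy => hpos' y (mem_insert_of_mem hy))
      (prod_nonneg fun i _ => hg0 _) (hg0 a)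

lemma le_mul_card_of_forall_exists_mul_mem {X : Finset ℕ} {N T : ℕ}
    (h : ∀ t ∈ Icc 1 T, ∃ j ∈ Icc 1 N, j * t ∈ X) : T ≤ N * #X := calc
  T = #(Icc 1 T) := by simp
  _ ≤ #((Icc 1 N).biUnion fun j => (Icc 1 T).filter (j * · ∈ X)) := by
    refine card_le_card fun t ht => ?_
    obtain ⟨j, hj, hjt⟩ := h t ht
    exact mem_biUnion.2 ⟨j, hj, mem_filter.2 ⟨ht, hjt⟩⟩
  _ ≤ ∑ j ∈ Icc 1 N, #((Icc 1 T).filter (j * · ∈ X)) := card_biUnion_le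
  _ ≤ ∑ j ∈ Icc 1 N, #X := by
    refine sum_le_sum fun j hj => card_le_card_of_injOn (j * ·) (fun t ht => (mem_filter.1 ht).2) ?_
    intro t _ t' _ htt'
    exact Nat.eq_of_mul_eq_mul_left (mem_Icc.1 hj).1 htt'
  _ = N * #X := by simp

open Nat in
lemma div_exp_one_pow_le_factorial (n : ℕ) : ((n : ℝ) / exp 1) ^ n ≤ n ! := by
  have h := Real.pow_div_factorial_le_exp _ (Nat.cast_nonneg n) n
  rw [← mul_one (n : ℝ), Real.exp_nat_mul, mul_one, div_le_iff₀ (by positivity)] at h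
  rw [div_pow, div_le_iff₀ (by positivity), mul_comm]
  exact h

open Nat in
lemma pow_le_prod_range_mul_div (n : ℕ) {c : ℝ} (hc : 0 ≤ c) :
    (c / exp 1) ^ n ≤ ∏ i ∈ range n, c * (i + 1) / n := by
  rcases n.eq_zero_or_pos with rfl | hn
  · simp
  have hprod : ∏ i ∈ range n, c * (i + 1) / n = (c / n) ^ n * n ! := calc
    _ = ∏ i ∈ range n, c / n * ((i + 1 : ℕ) : ℝ) := prod_congr rfl fun i _ => by push_cast; ring
    _ = (c / n) ^ n * n ! := by
      rw [prod_mul_distrib, prod_const, card_range, ← Nat.cast_prod,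
        prod_range_add_one_eq_factorial]
  have hsplit : (c / exp 1) ^ n = (c / n) ^ n * ((n : ℝ) / exp 1) ^ n := by
    rw [← mul_pow]
    field_simp
  rw [hprod, hsplit]
  exact mul_le_mul_of_nonneg_left (div_exp_one_pow_le_factorial n) (by positivity)

lemma pow_le_prod_min_one_mul_min {q : ℕ} {W : Finset ℕ} (hW : ∀ w ∈ W, 0 < w ∧ w < q) {L : ℝ}
    (hL0 : 0 ≤ L) (hL1 : L ≤ 1) :
    (L / (2 * exp 1)) ^ #W ≤ ∏ w ∈ W, min 1 (L * (min w (q - w) : ℕ) / #W) := by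
  -- `h` is injective on `W` (its values on the two halves have different parities) and is at
  -- most twice the distance from `w` to `{0, q}`
  set h : ℕ → ℕ := fun w => if 2 * w ≤ q then 2 * w else 2 * (q - w) - 1
  have hinj : Set.InjOn h W := fun x hx y hy hxy => by
    have := hW x hx; have := hW y hy
    simp only [h] at hxy; split_ifs at hxy <;> omega
  have hpos : ∀ w ∈ W, 0 < h w := fun w hw => by
    have := hW w hw; simp only [h]; split_ifs <;> omega
  have hle : ∀ w ∈ W, h w ≤ 2 * min w (q - w) := fun w hw => by
    have := hW w hw; simp only [h]; split_ifs <;> omega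
  set R := #W
  set g : ℕ → ℝ := fun i => min 1 (L * i / (2 * R))
  have hg : Monotone g := fun i j hij => by
    simp only [g]; gcongr
  have hg0 : ∀ i, 0 ≤ g i := fun i => le_min zero_le_one (by positivity)
  calc (L / (2 * exp 1)) ^ R = (L / 2 / exp 1) ^ R := by rw [div_div]
    _ ≤ ∏ i ∈ range R, L / 2 * (i + 1) / R := pow_le_prod_range_mul_div R (by positivity)
    _ = ∏ i ∈ range R, g (i + 1) := prod_congr rfl fun i hi => by
      have : (i : ℝ) + 1 ≤ R := by exact_mod_cast mem_range.1 hi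
      simp only [g]
      rw [min_eq_right]
      · push_cast; ring
      · rw [div_le_one (by linarith [i.cast_nonneg (α := ℝ)])]; push_cast; nlinarith
    _ ≤ ∏ w ∈ W, g (h w) := prod_range_le_prod_of_injOn hinj hpos hg hg0
    _ ≤ ∏ w ∈ W, min 1 (L * (min w (q - w) : ℕ) / R) :=
      prod_le_prod (fun w _ => hg0 _) fun w hw => min_le_min le_rfl <| by
        have : (h w : ℝ) ≤ 2 * (min w (q - w) : ℕ) := by exact_mod_cast hle w hw
        calc L * h w / (2 * R) ≤ L * (2 * (min w (q - w) : ℕ)) / (2 * R) := by gcongr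
          _ = L * (min w (q - w) : ℕ) / R := by
            rw [mul_left_comm, mul_div_mul_left _ _ two_ne_zero]

lemma exists_sum_le_and_min_le_norm_one_sub_fracChar {q : ℕ} {W : Finset ℕ}
    (hW : ∀ w ∈ W, w < q) {L : ℝ} {M : ℕ} (hWL : ((#W : ℝ) + 1) ^ 2 ≤ q * L)
    (hLM : q * L ≤ M + 2) :
    ∃ k : ℕ → ℕ, ∑ w ∈ W, k w ≤ M ∧
      ∀ w ∈ W, min 1 (L * (min w (q - w) : ℕ) / #W) ≤ ‖1 - fracChar q w (k w)‖ := by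
  rcases W.eq_empty_or_nonempty with rfl | hne
  · exact ⟨0, by simp, by simp⟩
  set R := #W
  have hR : 0 < R := hne.card_pos
  set K := M / R
  have hMK : M < K * R + R := Nat.lt_div_mul_add hR
  have hsq : (R + 1) ^ 2 ≤ M + 2 := by exact_mod_cast hWL.trans hLM
  have hRK : R + 1 ≤ K := (Nat.le_div_iff_mul_le hR).2 (by nlinarith)
  have hqL : q * L ≤ 4 * K * R := hLM.trans (by exact_mod_cast (by nlinarith : M + 2 ≤ 4 * K * R))
  choose! k hk using fun w hw =>
    exists_mem_Icc_min_le_norm_one_sub_fracChar (hW w hw) (K := K) (by omega)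
  refine ⟨k, ?_, fun w hw => le_trans (min_le_min le_rfl ?_) (hk w hw).2⟩
  · calc ∑ w ∈ W, k w ≤ R • K := sum_le_card_nsmul _ _ _ fun w hw => (mem_Icc.1 (hk w hw).1).2
      _ ≤ M := by rw [smul_eq_mul, mul_comm]; exact Nat.div_mul_le_self M R
  · have hq : (0 : ℝ) < q := by exact_mod_cast (w.zero_le.trans_lt (hW w hw))
    rw [div_le_div_iff₀ (by exact_mod_cast hR) hq]
    have : (0 : ℝ) ≤ (min w (q - w) : ℕ) := Nat.cast_nonneg _
    nlinarith

lemma prod_norm_one_sub_fracChar_le {ι : Type*} {q : ℕ} (s : Finset ι) (μ : ι → ℕ)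
    (W : Finset ℕ) (k : ℕ → ℤ) (hμ : ∀ n ∈ s, μ n = 0 ∨ μ n ∈ W) {n₀ : ι} (hn₀ : n₀ ∈ s)
    (h0 : μ n₀ = 0) (x : ℤ) :
    ∏ w ∈ W, ‖1 - fracChar q w (k w)‖ ≤
      ‖∑ n ∈ s, fracChar q (μ n) x * ∏ w ∈ W, (fracChar q (μ n) (k w) - fracChar q w (k w))‖ := by
  rw [sum_mul_prod_sub_eq_card_smul s (fun w : ℕ => fracChar q w) μ W k hμ x, nsmul_eq_mul,
    norm_mul, norm_mul, norm_fracChar, one_mul, Nat.cast_zero, norm_prod]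
  simp_rw [fracChar_zero]
  refine le_mul_of_one_le_left (by positivity) ?_
  rw [Complex.norm_natCast]
  exact_mod_cast card_pos.2 ⟨n₀, mem_filter.2 ⟨hn₀, h0⟩⟩

theorem exists_mem_Icc_pow_le_norm_sum_fracChar_of_lt {ι : Type*} {q : ℕ} (s : Finset ι)
    (μ : ι → ℕ) (hμ : ∀ n ∈ s, μ n < q) {n₀ : ι} (hn₀ : n₀ ∈ s) (h0 : μ n₀ = 0) {L : ℝ}
    (hL : L ≤ 1) (hsL : (#s : ℝ) ^ 2 ≤ q * L) {A B : ℤ} (hAB : A ≤ B)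
    (hBA : q * L - 2 ≤ B - A) :
    ∃ a ∈ Icc A B, (L / 50) ^ #s ≤ ‖∑ n ∈ s, fracChar q (μ n) a‖ := by
  set W := (s.image μ).erase 0
  have hW : ∀ w ∈ W, 0 < w ∧ w < q := fun w hw => by
    obtain ⟨hw0, hw⟩ := mem_erase.1 hw
    obtain ⟨n, hn, rfl⟩ := mem_image.1 hw
    exact ⟨Nat.pos_of_ne_zero hw0, hμ n hn⟩
  have hWs : #W + 1 ≤ #s := by
    rw [card_erase_add_one (h0 ▸ mem_image_of_mem μ hn₀)]
    exact card_image_le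
  have hs : (1 : ℝ) ≤ #s := by exact_mod_cast card_pos.2 ⟨n₀, hn₀⟩
  have hL0 : 0 ≤ L := by
    by_contra! hneg
    nlinarith [mul_nonpos_of_nonneg_of_nonpos (Nat.cast_nonneg q) hneg.le]
  have hWL : ((#W : ℝ) + 1) ^ 2 ≤ q * L :=
    le_trans (pow_le_pow_left₀ (by positivity) (by exact_mod_cast hWs) 2) hsL
  have hBA' : ((B - A).toNat : ℝ) = B - A := by exact_mod_cast Int.toNat_of_nonneg (by omega)
  obtain ⟨k, hkM, hk⟩ := exists_sum_le_and_min_le_norm_one_sub_fracChar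
    (fun w hw => (hW w hw).2) hWL (M := (B - A).toNat) (by rw [hBA']; linarith)
  obtain ⟨a, ha, hmax⟩ := exists_max_image (Icc A (A + ∑ w ∈ W, (k w : ℤ)))
    (fun y => ‖∑ n ∈ s, fracChar q (μ n) y‖)
    (nonempty_Icc.2 (le_add_of_nonneg_right (sum_nonneg fun _ _ => by positivity)))
  refine ⟨a, mem_Icc.2 ⟨(mem_Icc.1 ha).1, (mem_Icc.1 ha).2.trans ?_⟩, ?_⟩
  · have : ((∑ w ∈ W, k w : ℕ) : ℝ) ≤ B - A := by rw [← hBA']; exact_mod_cast hkM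
    push_cast at this
    exact_mod_cast (by linarith : (A : ℝ) + ∑ w ∈ W, (k w : ℝ) ≤ B)
  have hupper := norm_sum_mul_prod_sub_le_two_pow_mul s (fun n => fracChar q (μ n)) W k
    (ω := fun w => fracChar q w (k w)) (fun w _ => (norm_fracChar q _ _).le) A hmax
  have h50 : L / 50 ≤ L / (4 * exp 1) :=
    div_le_div_of_nonneg_left hL0 (by positivity) (by linarith [exp_one_lt_d9])
  calc (L / 50) ^ #s ≤ (L / 50) ^ #W :=
        pow_le_pow_of_le_one (by positivity) (by linarith) (by omega)
    _ ≤ (L / (4 * exp 1)) ^ #W := pow_le_pow_left₀ (by positivity) h50 _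
    _ = (L / (2 * exp 1)) ^ #W / 2 ^ #W := by rw [← div_pow]; ring_nf
    _ ≤ (∏ w ∈ W, min 1 (L * (min w (q - w) : ℕ) / #W)) / 2 ^ #W := by
      gcongr; exact pow_le_prod_min_one_mul_min hW hL0 hL
    _ ≤ (∏ w ∈ W, ‖1 - fracChar q w (k w)‖) / 2 ^ #W := by
      gcongr with w hw
      exact hk w hw
    _ ≤ ‖∑ n ∈ s, fracChar q (μ n) a‖ := by
      rw [div_le_iff₀ (by positivity), mul_comm]
      refine le_trans (prod_norm_one_sub_fracChar_le s μ W (fun w => (k w : ℤ)) (fun n hn =>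
        or_iff_not_imp_left.2 fun hn0 => mem_erase.2 ⟨hn0, mem_image_of_mem μ hn⟩) hn₀ h0 A) hupper

theorem exists_mem_Icc_pow_le_norm_sum_fracChar {ι : Type*} {q : ℕ} (s : Finset ι)
    (hs : s.Nonempty) (lam : ι → ℤ) {L : ℝ} (hL : L ≤ 1) (hsL : (#s : ℝ) ^ 2 ≤ q * L) {A B : ℤ}
    (hAB : A ≤ B) (hBA : q * L - 2 ≤ B - A) :
    ∃ a ∈ Icc A B, (L / 50) ^ #s ≤ ‖∑ n ∈ s, fracChar q (lam n) a‖ := by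
  obtain ⟨n₀, hn₀⟩ := hs
  have hq : q ≠ 0 := by
    rintro rfl
    have : (1 : ℝ) ≤ #s := by exact_mod_cast card_pos.2 ⟨n₀, hn₀⟩
    simp only [Nat.cast_zero, zero_mul] at hsL
    nlinarith
  have hres : ∀ n, (((lam n - lam n₀) % q).toNat : ℤ) = (lam n - lam n₀) % q := fun n =>
    Int.toNat_of_nonneg (Int.emod_nonneg _ (by exact_mod_cast hq))
  obtain ⟨a, ha, h⟩ := exists_mem_Icc_pow_le_norm_sum_fracChar_of_lt s
    (fun n => ((lam n - lam n₀) % q).toNat) (fun n _ => by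
      have := Int.emod_lt_of_pos (lam n - lam n₀) (by omega : (0 : ℤ) < q)
      omega) hn₀ (by simp) hL hsL hAB hBA
  refine ⟨a, ha, ?_⟩
  rw [norm_sum_fracChar_eq_norm_sum_emod q s lam (lam n₀) a hq]
  simpa only [hres] using h

lemma exists_forall_add_mul_mem_Icc {A B a₀ : ℤ} (ha₀ : a₀ ∈ Icc A B) :
    ∃ ε : ℤ, (ε = 1 ∨ ε = -1) ∧
      ∃ D : ℕ, B - A ≤ 2 * D ∧ ∀ m : ℕ, m ≤ D → a₀ + ε * m ∈ Icc A B := by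
  have := mem_Icc.1 ha₀
  rcases le_total (B - a₀) (a₀ - A) with hle | hle
  · exact ⟨-1, Or.inr rfl, (a₀ - A).toNat, by omega, fun m hm => mem_Icc.2 (by omega)⟩
  · exact ⟨1, Or.inl rfl, (B - a₀).toNat, by omega, fun m hm => mem_Icc.2 (by omega)⟩

theorem sub_add_two_le_mul_ncard {ι : Type*} (s : Finset ι) (hs : s.Nonempty)
    (ψ : ι → AddChar ℤ ℂ) (hψ : ∀ i x, ‖ψ i x‖ = 1) {A B a₀ : ℤ} (ha₀ : a₀ ∈ Icc A B) {δ : ℝ}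
    (h : 2 ^ #s * δ ≤ ‖∑ i ∈ s, ψ i a₀‖) :
    B - A + 2 ≤ 4 * #s ^ 2 * {a | a ∈ Icc A B ∧ δ ≤ ‖∑ i ∈ s, ψ i a‖}.ncard := by
  set N := #s
  set X := {a | a ∈ Icc A B ∧ δ ≤ ‖∑ i ∈ s, ψ i a‖}
  have hXfin : X.Finite := (Icc A B).finite_toSet.subset fun a ha => ha.1
  have hX : 1 ≤ X.ncard := by
    refine (Set.ncard_pos hXfin).2 ⟨a₀, ha₀, ?_⟩
    rcases le_or_gt δ 0 with hδ | hδ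
    · exact hδ.trans (norm_nonneg _)
    · exact le_trans (le_mul_of_one_le_left hδ.le (one_le_pow₀ one_le_two)) h
  obtain ⟨ε, hε, D, hD, hDmem⟩ := exists_forall_add_mul_mem_Icc ha₀
  set Y := (range (D + 1)).filter fun m : ℕ => δ ≤ ‖∑ i ∈ s, ψ i (a₀ + ε * m)‖
  have hTY : D / N ≤ N * #Y := le_mul_card_of_forall_exists_mul_mem fun t ht => by
    obtain ⟨j, hj, hjt⟩ := exists_le_norm_sum_add_nsmul s hs ψ hψ a₀ (ε * t) h
    have hjD : j * t ≤ D :=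
      (Nat.mul_le_mul (mem_Icc.1 hj).2 (mem_Icc.1 ht).2).trans (Nat.mul_div_le D N)
    refine ⟨j, hj, mem_filter.2 ⟨mem_range.2 (by omega), ?_⟩⟩
    convert hjt using 4
    push_cast
    ring
  have hYX : #Y ≤ X.ncard := by
    rw [← Set.ncard_coe_finset]
    refine Set.ncard_le_ncard_of_injOn (fun m : ℕ => a₀ + ε * m) (fun m hm => ?_)
      (fun m _ m' _ hmm' => ?_) hXfin
    · obtain ⟨hm, hδ⟩ := mem_filter.1 hm
      exact ⟨hDmem m (Nat.lt_succ_iff.1 (mem_range.1 hm)), hδ⟩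
    · rcases hε with rfl | rfl <;> simp only at hmm' <;> omega
  have hDN : D + 1 ≤ N * (D / N) + N := by
    have := Nat.lt_mul_div_succ (b := N) D hs.card_pos
    rw [mul_add, mul_one] at this
    omega
  have hNT : N * (D / N) ≤ N ^ 2 * X.ncard := calc
    N * (D / N) ≤ N * (N * X.ncard) :=
      Nat.mul_le_mul_left _ (hTY.trans (Nat.mul_le_mul_left _ hYX))
    _ = N ^ 2 * X.ncard := by ring
  have hN : N ≤ N ^ 2 * X.ncard := calc
    N ≤ N ^ 2 := Nat.le_self_pow two_ne_zero N
    _ ≤ N ^ 2 * X.ncard := Nat.le_mul_of_pos_right _ hX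
  have : 2 * D + 2 ≤ 4 * N ^ 2 * X.ncard := by linarith
  zify at this
  linarith

lemma intCast_div_mem_Icc_iff {q : ℕ} (hq : 0 < q) (a : ℤ) (u v : ℝ) :
    (a : ℝ) / q ∈ Set.Icc u v ↔ a ∈ Icc ⌈q * u⌉ ⌊q * v⌋ := by
  have hq' : (0 : ℝ) < q := by exact_mod_cast hq
  rw [Set.mem_Icc, mem_Icc, Int.ceil_le, Int.le_floor, le_div_iff₀ hq', div_le_iff₀ hq',
    mul_comm u, mul_comm v]

theorem turan_lower_bound_general
    (N : ℕ) (hN : 0 < N) (lam : ℕ → ℤ) (q : ℕ) (hq : 0 < q)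
    (u v : ℝ) (hu : 0 ≤ u) (hv : v ≤ 1)
    (hlen : (N : ℝ) ^ 2 / q ≤ v - u) :
    (q : ℝ) * (v - u) / (100 * N) ^ 2 ≤
      ({a : ℤ | (a : ℝ) / q ∈ Set.Icc u v ∧
          ((v - u) / 100) ^ N ≤
            ‖∑ n ∈ Finset.Icc 1 N, e2pi ((lam n : ℝ) * a / q)‖}.ncard : ℝ) := by
  have hs : (Icc 1 N).Nonempty := nonempty_Icc.2 hN
  have hcard : #(Icc 1 N) = N := by simp
  have hNL : (N : ℝ) ^ 2 ≤ q * (v - u) := by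
    rwa [div_le_iff₀ (by exact_mod_cast hq), mul_comm] at hlen
  have hA := Int.ceil_lt_add_one (q * u)
  have hB := Int.sub_one_lt_floor (q * v)
  have hN1 : (1 : ℝ) ≤ N ^ 2 := by exact_mod_cast Nat.one_le_pow _ _ hN
  have hAB : ⌈q * u⌉ ≤ ⌊q * v⌋ := Int.le_floor.2 (by linarith)
  obtain ⟨a₀, ha₀, hfa₀⟩ := exists_mem_Icc_pow_le_norm_sum_fracChar (Icc 1 N) hs lam
    (L := v - u) (by linarith) (by rwa [hcard]) hAB (by linarith)
  rw [hcard] at hfa₀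
  have hcount := sub_add_two_le_mul_ncard (Icc 1 N) hs (fun n => fracChar q (lam n))
    (fun _ _ => norm_fracChar q _ _) ha₀ (δ := ((v - u) / 100) ^ N)
    (by rwa [hcard, ← mul_pow, show 2 * ((v - u) / 100) = (v - u) / 50 by ring])
  rw [hcard] at hcount
  have hcountR := (Int.cast_le (R := ℝ)).2 hcount
  push_cast at hcountR
  simp_rw [intCast_div_mem_Icc_iff hq, ← fracChar_apply]
  rw [div_le_iff₀ (by positivity)]
  nlinarith

/-- Lemma (Turán-type lower bound): for integers `λ₁,…,λ_N`, `q ≥ 1`, and a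
closed interval `I = [u,v] ⊆ [0,1]` with `|I| ≥ N²/q`, the number of integers
`a` with `a/q ∈ I` and `|∑_{n=1}^N e(λ_n a/q)| ≥ (|I|/100)^N` is at least
`q|I|/(100N)²`. -/
theorem turan_lower_bound
    (N : ℕ) (hN : 0 < N) (lam : ℕ → ℤ) (q : ℕ) (hq : 0 < q)
    (u v : ℝ) (hu : 0 ≤ u) (huv : u ≤ v) (hv : v ≤ 1)
    (hlen : (N : ℝ) ^ 2 / q ≤ v - u) :
    (q : ℝ) * (v - u) / (100 * N) ^ 2 ≤
      ({a : ℤ | (a : ℝ) / q ∈ Set.Icc u v ∧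
          ((v - u) / 100) ^ N ≤
            ‖∑ n ∈ Finset.Icc 1 N, e2pi ((lam n : ℝ) * a / q)‖}.ncard : ℝ) :=
  turan_lower_bound_general N hN lam q hq u v hu hv hlen
end

section
/- Let r > 2 and let r′ be its Hölder conjugate, i.e. 1/r + 1/r′ = 1. Let E_r = ({x : |x − a/q| < q^{−r} for infinitely many irreducible fractions a/q} ∪ ℚ) ∩ [0,1]. If x ∈ [0,1] is irrational and x ∉ E_r, and {a_n/q_n}_{n=1}^∞ are the convergents of the continued fraction of x, then for all sufficiently large n, q_n^{−r} ≤ |x − a_n/q_n| < |x − a_{n−1}/q_{n−1}| < q_n^{−r′}. -/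
/-!
Outside `E_r` only finitely many reduced fractions `a/q` satisfy `|x - a/q| < q^{-r}`. The
convergents `aₙ/qₙ` are reduced fractions with `qₙ → ∞`, so eventually `qₙ^{-r} ≤ |x - aₙ/qₙ|`.
Against the classical strict bound `|x - aₙ/qₙ| < 1/(qₙ qₙ₊₁)` this forces `qₙ₊₁ < qₙ^{r-1}`,
i.e. `qₙ₊₁^{r'} < qₙ qₙ₊₁` because `(r - 1)(r' - 1) = 1`, which is the last inequality. The
middle one is the strict decrease of the approximation errors of the convergents.
-/

open Filter

open GenContFract
open GenContFract (of)

namespace GenContFract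

variable {K : Type*} [Field K] [LinearOrder K] [FloorRing K] {v : K} {n : ℕ}

theorem exists_int_eq_contsAux (v : K) (n : ℕ) :
    ∃ a b : ℤ, (of v).contsAux n = ⟨a, b⟩ := by
  induction n using Nat.strong_induction_on with
  | _ n ih =>
    match n with
    | 0 => exact ⟨1, 0, by simp [contsAux]⟩
    | 1 => exact ⟨⌊v⌋, 1, by simp [contsAux, of_h_eq_floor]⟩
    | n + 2 =>
      obtain ⟨a, b, hab⟩ := ih (n + 1) (by omega)
      rcases hs : (of v).s.get? n with _ | gp
      · exact ⟨a, b, by rw [contsAux_stable_step_of_terminated hs, hab]⟩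
      · obtain ⟨a', b', hab'⟩ := ih n (by omega)
        obtain ⟨ha, z, hb⟩ := of_partNum_eq_one_and_exists_int_partDen_eq hs
        refine ⟨z * a + a', z * b + b', ?_⟩
        rw [contsAux_recurrence hs hab' hab, ha, hb]
        push_cast
        ring_nf

section StrictOrdered

variable [IsStrictOrderedRing K]

theorem one_le_of_den : 1 ≤ (of v).dens n := by
  induction n with
  | zero => rw [zeroth_den_eq_one]
  | succ n ih => exact ih.trans of_den_mono

theorem zero_lt_of_den : 0 < (of v).dens n :=
  zero_lt_one.trans_le one_le_of_den

theorem exists_coprime_eq_num_den (h : ¬(of v).TerminatedAt n) :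
    ∃ (a : ℤ) (q : ℕ), 0 < q ∧ a.gcd q = 1 ∧ (of v).nums n = a ∧ (of v).dens n = q := by
  have hnum (m : ℕ) : (of v).nums m = ((of v).contsAux (m + 1)).a := by
    rw [num_eq_conts_a, nth_cont_eq_succ_nth_contAux]
  have hden (m : ℕ) : (of v).dens m = ((of v).contsAux (m + 1)).b := by
    rw [den_eq_conts_b, nth_cont_eq_succ_nth_contAux]
  obtain ⟨a, b, hab⟩ := exists_int_eq_contsAux v (n + 1)
  obtain ⟨a', b', hab'⟩ := exists_int_eq_contsAux v (n + 2)
  have hdet : a * b' - b * a' = (-1) ^ (n + 1) := by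
    have := SimpContFract.determinant (s := SimpContFract.of v) h
    simp only [SimpContFract.of, hnum, hden, hab, hab'] at this
    exact_mod_cast this
  have hb : (1 : K) ≤ b := by simpa [hden, hab] using one_le_of_den (v := v) (n := n)
  have hb : 0 < b := by exact_mod_cast zero_lt_one.trans_le hb
  lift b to ℕ using hb.le
  refine ⟨a, b, by omega, ?_, by simp [hnum, hab], by simp [hden, hab]⟩
  have hsq : ((-1 : ℤ) ^ (n + 1)) ^ 2 = 1 := by
    rw [← pow_mul]; exact Even.neg_one_pow ⟨n + 1, by ring⟩
  rw [← Int.isCoprime_iff_gcd_eq_one]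
  exact ⟨(-1) ^ (n + 1) * b', -(-1) ^ (n + 1) * a', by
    linear_combination (-1 : ℤ) ^ (n + 1) * hdet + hsq⟩

theorem abs_convs_succ_sub_convs (h : ¬(of v).TerminatedAt n) :
    |(of v).convs (n + 1) - (of v).convs n| = 1 / ((of v).dens n * (of v).dens (n + 1)) := by
  have hdet := SimpContFract.determinant (s := SimpContFract.of v) h
  have hq : 0 < (of v).dens n := zero_lt_of_den
  have hq' : 0 < (of v).dens (n + 1) := zero_lt_of_den
  simp only [SimpContFract.of] at hdet
  rw [conv_eq_num_div_den, conv_eq_num_div_den, div_sub_div _ _ hq'.ne' hq.ne',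
    show (of v).nums (n + 1) * (of v).dens n - (of v).dens (n + 1) * (of v).nums n = (-1) ^ n by
      linear_combination -hdet,
    abs_div, abs_neg_one_pow, abs_of_pos (by positivity), mul_comm]

theorem dens_add_dens_le (h : ¬(of v).TerminatedAt (n + 1)) :
    (of v).dens n + (of v).dens (n + 1) ≤ (of v).dens (n + 2) := by
  obtain ⟨gp, hgp⟩ := Option.ne_none_iff_exists'.1 h
  have ha : gp.a = 1 := of_partNum_eq_one (partNum_eq_s_a hgp)
  have hb : 1 ≤ gp.b := of_one_le_get?_partDen (partDen_eq_s_b hgp)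
  rw [dens_recurrence hgp rfl rfl, ha, one_mul, add_comm]
  have : 0 ≤ (of v).dens (n + 1) := zero_le_of_den
  nlinarith

end StrictOrdered

end GenContFract

namespace Real.HolderConjugate

theorem one_div_mul_lt_rpow_neg_of_rpow_neg_lt {p q a b : ℝ} (hpq : p.HolderConjugate q)
    (ha : 0 < a) (hb : 0 < b) (h : a ^ (-p) < 1 / (a * b)) : 1 / (a * b) < b ^ (-q) := by
  -- In logarithms: `log b < (p - 1) log a` gives `(q - 1) log b < log a` as `(p - 1)(q - 1) = 1`.
  rw [← Real.log_lt_log_iff (by positivity) (by positivity), Real.log_rpow ha, one_div,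
    Real.log_inv, Real.log_mul ha.ne' hb.ne'] at h
  rw [← Real.log_lt_log_iff (by positivity) (by positivity), Real.log_rpow hb, one_div,
    Real.log_inv, Real.log_mul ha.ne' hb.ne']
  have hq : 0 < q - 1 := hpq.symm.sub_one_pos
  have hpq' : (p - 1) * (q - 1) * Real.log a = Real.log a := by
    rw [show (p - 1) * (q - 1) = 1 by linear_combination hpq.mul_eq_add, one_mul]
  nlinarith [mul_pos hq (by linarith : 0 < (p - 1) * Real.log a - Real.log b)]

end Real.HolderConjugate

namespace Irrational

variable {x : ℝ}

theorem not_terminatedAt_of (hx : Irrational x) (n : ℕ) : ¬(of x).TerminatedAt n := fun h => by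
  obtain ⟨q, hq⟩ := (terminates_iff_rat x).1 ⟨n, h⟩
  exact hx ⟨q, hq.symm⟩

theorem tendsto_dens_of (hx : Irrational x) : Tendsto (fun n => (of x).dens n) atTop atTop := by
  rw [← tendsto_add_atTop_iff_nat 1]
  refine tendsto_atTop_mono
    (fun n => succ_nth_fib_le_of_nth_den (Or.inr (hx.not_terminatedAt_of n))) ?_
  exact tendsto_natCast_atTop_atTop.comp Nat.fib_add_two_strictMono.tendsto_atTop

theorem abs_sub_convs_lt (hx : Irrational x) (n : ℕ) :
    |x - (of x).convs n| < 1 / ((of x).dens n * (of x).dens (n + 1)) := by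
  -- Equality would put `x` at one of the rational points `cₙ₊₁` or `2 cₙ - cₙ₊₁`.
  refine (abs_sub_convs_le (hx.not_terminatedAt_of n)).lt_of_ne fun h => ?_
  rw [← abs_convs_succ_sub_convs (hx.not_terminatedAt_of n)] at h
  obtain ⟨c, hc⟩ := exists_rat_eq_nth_conv x n
  obtain ⟨c', hc'⟩ := exists_rat_eq_nth_conv x (n + 1)
  rw [hc, hc'] at h
  rcases abs_eq_abs.1 h with h | h
  · exact hx ⟨c', by linarith⟩
  · exact hx ⟨2 * c - c', by push_cast; linarith⟩

theorem abs_sub_convs_succ_lt (hx : Irrational x) (n : ℕ) :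
    |x - (of x).convs (n + 1)| < |x - (of x).convs n| := by
  -- The two errors add up to at least `|cₙ₊₁ - cₙ| = 1/(qₙ qₙ₊₁)`, while the second one is
  -- below `1/(qₙ₊₁ qₙ₊₂) ≤ 1/(2 qₙ qₙ₊₁)`.
  have hgap := abs_convs_succ_sub_convs (hx.not_terminatedAt_of n)
  have htri := abs_sub_le ((of x).convs (n + 1)) x ((of x).convs n)
  rw [abs_sub_comm _ x] at htri
  have hdens : 2 * (of x).dens n ≤ (of x).dens (n + 2) := by
    linarith [dens_add_dens_le (hx.not_terminatedAt_of (n + 1)), of_den_mono (v := x) (n := n)]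
  have hnext : 2 * (1 / ((of x).dens (n + 1) * (of x).dens (n + 2))) ≤
      1 / ((of x).dens n * (of x).dens (n + 1)) := by
    have := zero_lt_of_den (v := x) (n := n)
    have := zero_lt_of_den (v := x) (n := n + 1)
    have := zero_lt_of_den (v := x) (n := n + 2)
    rw [mul_one_div, div_le_div_iff₀ (by positivity) (by positivity)]
    nlinarith
  linarith [hx.abs_sub_convs_lt (n + 1)]

theorem eventually_rpow_neg_dens_le_abs_sub_convs (hx : Irrational x) {r : ℝ}
    (hfin : {aq : ℤ × ℕ | 0 < aq.2 ∧ Int.gcd aq.1 aq.2 = 1 ∧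
      |x - (aq.1 : ℝ) / aq.2| < (aq.2 : ℝ) ^ (-r)}.Finite) :
    ∀ᶠ n in atTop, (of x).dens n ^ (-r) ≤ |x - (of x).convs n| := by
  obtain ⟨M, hM⟩ := (hfin.image Prod.snd).bddAbove
  filter_upwards [hx.tendsto_dens_of.eventually_gt_atTop (M : ℝ)] with n hn
  obtain ⟨a, q, hq, hcop, ha, hq'⟩ := exists_coprime_eq_num_den (hx.not_terminatedAt_of n)
  rw [conv_eq_num_div_den, ha, hq']
  rw [hq'] at hn
  by_contra! hlt
  have : q ≤ M := hM ⟨(a, q), ⟨hq, hcop, hlt⟩, rfl⟩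
  exact (Nat.cast_lt.1 hn).not_ge this

end Irrational

theorem convergents_outside_Er_general
    (r r' : ℝ) (hr : 2 < r) (hconj : 1 / r + 1 / r' = 1)
    (x : ℝ) (hirr : Irrational x)
    (hfin : {aq : ℤ × ℕ | 0 < aq.2 ∧ Int.gcd aq.1 aq.2 = 1 ∧
      |x - (aq.1 : ℝ) / aq.2| < (aq.2 : ℝ) ^ (-r)}.Finite) :
    ∀ᶠ n : ℕ in atTop,
      ((GenContFract.of x).dens (n + 1)) ^ (-r) ≤
          |x - (GenContFract.of x).nums (n + 1) /
            (GenContFract.of x).dens (n + 1)| ∧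
      |x - (GenContFract.of x).nums (n + 1) /
          (GenContFract.of x).dens (n + 1)| <
        |x - (GenContFract.of x).nums n / (GenContFract.of x).dens n| ∧
      |x - (GenContFract.of x).nums n / (GenContFract.of x).dens n| <
        ((GenContFract.of x).dens (n + 1)) ^ (-r') := by
  have hrr' : r.HolderConjugate r' :=
    Real.holderConjugate_iff.2 ⟨by linarith, by simpa only [one_div] using hconj⟩
  have hgood := hirr.eventually_rpow_neg_dens_le_abs_sub_convs hfin
  filter_upwards [hgood, (tendsto_add_atTop_nat 1).eventually hgood] with n hn hn'
  simp only [← conv_eq_num_div_den]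
  have hlt := hirr.abs_sub_convs_lt n
  refine ⟨hn', hirr.abs_sub_convs_succ_lt n, hlt.trans ?_⟩
  exact hrr'.one_div_mul_lt_rpow_neg_of_rpow_neg_lt zero_lt_of_den zero_lt_of_den
    (hn.trans_lt hlt)

/-- Lemma (continued-fraction approximation outside the Jarník set `E_r`):
if `r > 2`, `1/r + 1/r' = 1`, `x ∈ [0,1]` is irrational and only finitely many
irreducible fractions `a/q` satisfy `|x - a/q| < q^{-r}` (i.e. `x ∉ E_r`),
then for all large `n` the convergents `aₙ/qₙ` of `x` satisfy
`qₙ^{-r} ≤ |x - aₙ/qₙ| < |x - aₙ₋₁/qₙ₋₁| < qₙ^{-r'}`. -/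
theorem convergents_outside_Er
    (r r' : ℝ) (hr : 2 < r) (hconj : 1 / r + 1 / r' = 1)
    (x : ℝ) (hx : x ∈ Set.Icc (0 : ℝ) 1) (hirr : Irrational x)
    (hfin : {aq : ℤ × ℕ | 0 < aq.2 ∧ Int.gcd aq.1 aq.2 = 1 ∧
      |x - (aq.1 : ℝ) / aq.2| < (aq.2 : ℝ) ^ (-r)}.Finite) :
    ∀ᶠ n : ℕ in atTop,
      ((GenContFract.of x).dens (n + 1)) ^ (-r) ≤
          |x - (GenContFract.of x).nums (n + 1) /
            (GenContFract.of x).dens (n + 1)| ∧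
      |x - (GenContFract.of x).nums (n + 1) /
          (GenContFract.of x).dens (n + 1)| <
        |x - (GenContFract.of x).nums n / (GenContFract.of x).dens n| ∧
      |x - (GenContFract.of x).nums n / (GenContFract.of x).dens n| <
        ((GenContFract.of x).dens (n + 1)) ^ (-r') :=
  convergents_outside_Er_general r r' hr hconj x hirr hfin
end
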